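/- arXiv:2106.03837 — 3 statements merged into one kernel-verified Lean document; each statement's English description precedes it below -/
import Mathlib

section
/- Let $f : \mathbb{R}^d \to \mathbb{R}^D$ and suppose that on the closed ball $\mathcal{B}_r(x) = \{x' : \|x-x'\|_2 \le r\}$ the function $f$ agrees with a linear map $M : \mathbb{R}^d \to \mathbb{R}^D$ (i.e., $f(x') = Mx'$ for all $x' \in \mathcal{B}_r(x)$). If $d > D$, then there exists $\delta \in \mathbb{R}^d$ with $\|\delta\|_2 = r$ such that $f(x+\delta) = f(x)$. -/
theorem stmt_3 (d D : ℕ) (hdD : d > D)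
    (f : EuclideanSpace ℝ (Fin d) → EuclideanSpace ℝ (Fin D))
    (M : EuclideanSpace ℝ (Fin d) →ₗ[ℝ] EuclideanSpace ℝ (Fin D))
    (x : EuclideanSpace ℝ (Fin d)) (r : ℝ) (hr : 0 < r)
    (hloc : ∀ x' : EuclideanSpace ℝ (Fin d), ‖x - x'‖ ≤ r → f x' = M x') :
    ∃ δ : EuclideanSpace ℝ (Fin d), ‖δ‖ = r ∧ f (x + δ) = f x := by
  have hker : LinearMap.ker M ≠ ⊥ := by
    apply LinearMap.ker_ne_bot_of_finrank_lt
    simpa using hdD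
  obtain ⟨v, hv, hv0⟩ := Submodule.exists_mem_ne_zero_of_ne_bot hker
  have hvnorm : ‖v‖ ≠ 0 := norm_ne_zero_iff.mpr hv0
  set δ := (r / ‖v‖) • v with hδ
  have hδnorm : ‖δ‖ = r := by
    rw [hδ, norm_smul, Real.norm_eq_abs, abs_div, abs_of_pos hr, abs_of_nonneg (norm_nonneg v),
      div_mul_cancel₀ _ hvnorm]
  have hδker : M δ = 0 := by
    rw [hδ, map_smul, LinearMap.mem_ker.mp hv, smul_zero]
  refine ⟨δ, hδnorm, ?_⟩
  rw [hloc (x + δ) (by simp [hδnorm, hr.le]), hloc x (by simp [hr.le]), map_add, hδker, add_zero]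
end

section
/- Let $(\mu_t)$ be a sequence in $\mathbb{R}^d$ with $\|\mu_t - \mu_{t'}\|_2 \ge (t'-t)\alpha$ for all $t < t'$, where $\alpha > 0$. Let $x_t \sim \mathcal{N}(\mu_t, \sigma^2 I)$ independently for each $t$, and let $\tau > 2\sigma\sqrt{d(1+\epsilon)}/\alpha$ be a positive integer for some $\epsilon \in (0,1)$. Then for every $t$, with probability at least $1 - 2\exp(-d\epsilon^2/8)$, both $\|x_t - \mu_t\|_2 \le \sigma\sqrt{d(1+\epsilon)}$ and $\|x_{t+\tau} - \mu_t\|_2 > \sigma\sqrt{d(1+\epsilon)}$ hold. -/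
open MeasureTheory ProbabilityTheory Real
open scoped NNReal ENNReal

/-!
Each sample lies outside the ball of radius `σ √(d (1 + ε))` around its own mean with probability
at most `exp (-d ε² / 8)`: this is a Chernoff bound for the χ²-variable `‖x_s - μ_s‖² / σ²`, whose
moment generating function is `(1 - 2λ)^(-d/2)`, combined with `√(1 + ε) ≤ exp (ε / 2 - ε² / 8)`.
Outside both bad events (union bound), `x_t` is in the ball around `μ_t`, while `x_{t+τ}` is within
`σ √(d (1 + ε))` of `μ_{t+τ}`, which is at distance `τ α > 2 σ √(d (1 + ε))` from `μ_t`.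
-/

theorem lintegral_pi_prod {ι : Type*} [Fintype ι] {E : ι → Type*} [∀ i, MeasurableSpace (E i)]
    (μ : ∀ i, Measure (E i)) [∀ i, IsProbabilityMeasure (μ i)] {f : ∀ i, E i → ℝ≥0∞}
    (hf : ∀ i, Measurable (f i)) :
    ∫⁻ x, ∏ i, f i (x i) ∂Measure.pi μ = ∏ i, ∫⁻ y, f i y ∂μ i := by
  rw [lintegral_prod_eq_prod_lintegral_of_indepFun _ _
    (iIndepFun_pi fun i => (hf i).aemeasurable) fun i => (hf i).comp (measurable_pi_apply i)]
  exact Finset.prod_congr rfl fun i _ => (measurePreserving_eval μ i).lintegral_comp (hf i)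

theorem lintegral_exp_mul_sq_gaussianReal (c : ℝ) {v : ℝ≥0} (hv : v ≠ 0) {l : ℝ}
    (hl : 2 * l * v < 1) :
    ∫⁻ y, ENNReal.ofReal (exp (l * (y - c) ^ 2)) ∂gaussianReal c v
      = ENNReal.ofReal (√(1 - 2 * l * v))⁻¹ := by
  have hv0 : (0 : ℝ) < v := by positivity
  set b : ℝ := (1 - 2 * l * v) / (2 * v) with hb
  have hb0 : 0 < b := div_pos (by linarith) (by positivity)
  have hdens : ∀ y, gaussianPDF c v y * ENNReal.ofReal (exp (l * (y - c) ^ 2))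
      = ENNReal.ofReal ((√(2 * π * v))⁻¹ * exp (-b * (y - c) ^ 2)) := by
    intro y
    rw [gaussianPDF, ← ENNReal.ofReal_mul (gaussianPDFReal_nonneg c v y), gaussianPDFReal,
      mul_assoc, ← exp_add]
    congr 3
    rw [hb]
    field_simp
    ring
  have hint : Integrable fun y => (√(2 * π * v))⁻¹ * exp (-b * (y - c) ^ 2) :=
    ((integrable_exp_neg_mul_sq hb0).comp_sub_right c).const_mul _
  rw [gaussianReal_of_var_ne_zero c hv, lintegral_withDensity_eq_lintegral_mul _
    (measurable_gaussianPDF c v) (by fun_prop)]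
  simp only [Pi.mul_apply, hdens]
  rw [← ofReal_integral_eq_lintegral_ofReal hint (.of_forall fun y => by positivity),
    integral_const_mul, integral_sub_right_eq_self (fun y => exp (-b * y ^ 2)) c,
    integral_gaussian, hb, div_div_eq_mul_div, sqrt_div' _ (by linarith : 0 ≤ 1 - 2 * l * v)]
  congr 1
  field_simp

theorem sqrt_one_add_le_exp {ε : ℝ} (h0 : 0 ≤ ε) (h1 : ε ≤ 1) :
    √(1 + ε) ≤ exp (ε / 2 - ε ^ 2 / 8) := by
  have hexp : 1 + ε ≤ exp (ε - ε ^ 2 / 4) := by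
    have := quadratic_le_exp_of_nonneg (x := ε - ε ^ 2 / 4) (by nlinarith)
    nlinarith [mul_nonneg (mul_nonneg h0 h0) (sub_nonneg.2 h1)]
  calc √(1 + ε) ≤ √(exp (ε - ε ^ 2 / 4)) := sqrt_le_sqrt hexp
    _ = exp (ε / 2 - ε ^ 2 / 8) := by
      rw [← exp_half]; ring_nf

theorem lintegral_exp_mul_sum_sq_pi_gaussianReal {ι : Type*} [Fintype ι] (m : ι → ℝ)
    {v : ℝ≥0} (hv : v ≠ 0) {l : ℝ} (hl : 2 * l * v < 1) :
    ∫⁻ y, ENNReal.ofReal (exp (l * ∑ i, (y i - m i) ^ 2))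
        ∂Measure.pi (fun i => gaussianReal (m i) v)
      = ENNReal.ofReal (√(1 - 2 * l * v))⁻¹ ^ Fintype.card ι := by
  simp only [Finset.mul_sum, exp_sum, ENNReal.ofReal_prod_of_nonneg fun i _ => (exp_pos _).le]
  rw [lintegral_pi_prod _ (f := fun i y => ENNReal.ofReal (exp (l * (y - m i) ^ 2)))
    fun i => by fun_prop]
  simp only [lintegral_exp_mul_sq_gaussianReal _ hv hl, Finset.prod_const, Finset.card_univ]

theorem measure_ge_le_lintegral_exp_mul_div {E : Type*} [MeasurableSpace E] (ν : Measure E)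
    {S : E → ℝ} (hS : Measurable S) {l : ℝ} (hl : 0 ≤ l) (a : ℝ) :
    ν {y | a ≤ S y}
      ≤ (∫⁻ y, ENNReal.ofReal (exp (l * S y)) ∂ν) / ENNReal.ofReal (exp (l * a)) :=
  (measure_mono fun _ hy => ENNReal.ofReal_le_ofReal (exp_le_exp.2 (by gcongr; exact hy))).trans
    (meas_ge_le_lintegral_div (Measurable.aemeasurable (by fun_prop)) (by simp [exp_pos])
      ENNReal.ofReal_ne_top)

theorem measure_pi_gaussianReal_sum_sq_ge_le {ι : Type*} [Fintype ι] (m : ι → ℝ) {v : ℝ≥0}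
    (hv : v ≠ 0) {ε : ℝ} (h0 : 0 ≤ ε) (h1 : ε ≤ 1) :
    Measure.pi (fun i => gaussianReal (m i) v)
        {y | Fintype.card ι * v * (1 + ε) ≤ ∑ i, (y i - m i) ^ 2}
      ≤ ENNReal.ofReal (exp (-Fintype.card ι * ε ^ 2 / 8)) := by
  set n := Fintype.card ι
  have hv0 : (0 : ℝ) < v := by positivity
  -- the Chernoff parameter for which `1 - 2 l v = (1 + ε)⁻¹`
  set l : ℝ := ε / (2 * v * (1 + ε)) with hl
  have hlv : 1 - 2 * l * v = (1 + ε)⁻¹ := by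
    rw [hl]; field_simp; ring
  have hmgf := lintegral_exp_mul_sum_sq_pi_gaussianReal m hv (l := l)
    (by rw [← sub_pos, hlv]; positivity)
  rw [hlv, sqrt_inv, inv_inv] at hmgf
  have hexponent : -(n : ℝ) * ε ^ 2 / 8 + l * (n * v * (1 + ε)) = n * (ε / 2 - ε ^ 2 / 8) := by
    rw [hl]; field_simp; ring
  refine (measure_ge_le_lintegral_exp_mul_div _ (by fun_prop) (l := l) (by positivity) _).trans ?_
  rw [hmgf]
  refine ENNReal.div_le_of_le_mul ?_
  rw [← ENNReal.ofReal_pow (sqrt_nonneg _), ← ENNReal.ofReal_mul (exp_pos _).le, ← exp_add,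
    hexponent, exp_nat_mul]
  gcongr
  exact sqrt_one_add_le_exp h0 h1

theorem measure_sqrt_sum_sq_sub_gt_le {Ω ι : Type*} [MeasurableSpace Ω] [Fintype ι]
    {P : Measure Ω} {X : Ω → ι → ℝ} {m : ι → ℝ} {σ : ℝ≥0} (hσ : 0 < σ)
    (hX : P.map X = Measure.pi fun i => gaussianReal (m i) (σ ^ 2)) {ε : ℝ} (h0 : 0 ≤ ε)
    (h1 : ε ≤ 1) :
    P {ω | σ * √(Fintype.card ι * (1 + ε)) < √(∑ i, (X ω i - m i) ^ 2)}
      ≤ ENNReal.ofReal (exp (-Fintype.card ι * ε ^ 2 / 8)) := by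
  have hXm : AEMeasurable X P :=
    .of_map_ne_zero (by rw [hX]; exact IsProbabilityMeasure.ne_zero _)
  have hsub : {ω | σ * √(Fintype.card ι * (1 + ε)) < √(∑ i, (X ω i - m i) ^ 2)}
      ⊆ X ⁻¹' {y | Fintype.card ι * ↑(σ ^ 2) * (1 + ε) ≤ ∑ i, (y i - m i) ^ 2} := by
    intro ω hω
    rw [Set.mem_ofPred_eq, lt_sqrt (by positivity), mul_pow, sq_sqrt (by positivity)] at hω
    simp only [Set.mem_preimage, Set.mem_ofPred_eq, NNReal.coe_pow]
    linarith
  calc _ ≤ P (X ⁻¹' _) := measure_mono hsub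
    _ = _ := (Measure.map_apply_of_aemeasurable hXm
      (measurableSet_le (by fun_prop) (by fun_prop))).symm
    _ ≤ _ := hX ▸ measure_pi_gaussianReal_sum_sq_ge_le m (by positivity) h0 h1

theorem sqrt_sum_sq_sub_le_add {ι : Type*} [Fintype ι] (u w z : ι → ℝ) :
    √(∑ i, (u i - w i) ^ 2) ≤ √(∑ i, (z i - u i) ^ 2) + √(∑ i, (z i - w i) ^ 2) := by
  simpa only [EuclideanSpace.dist_eq, Real.dist_eq, sq_abs, PiLp.toLp_apply] using
    dist_triangle_left (WithLp.toLp 2 u) (WithLp.toLp 2 w) (WithLp.toLp 2 z)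

theorem stmt_8_general {Ω : Type*} [MeasurableSpace Ω] (P : Measure Ω) [IsProbabilityMeasure P]
    (d : ℕ) (μ : ℕ → Fin d → ℝ) (α : ℝ) (hα : 0 < α)
    (hdrift : ∀ t t' : ℕ, t < t' →
      ((t' : ℝ) - t) * α ≤ Real.sqrt (∑ i, (μ t i - μ t' i) ^ 2))
    (σ : ℝ≥0) (hσ : 0 < σ) (ε : ℝ) (hε : ε ∈ Set.Ioo (0 : ℝ) 1)
    (x : ℕ → Ω → (Fin d → ℝ))
    (hlaw : ∀ t, Measure.map (x t) P = Measure.pi fun i : Fin d => gaussianReal (μ t i) (σ ^ 2))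
    (τ : ℕ) (hτ : (τ : ℝ) > 2 * σ * Real.sqrt (d * (1 + ε)) / α) (t : ℕ) :
    1 - 2 * ENNReal.ofReal (Real.exp (-(d : ℝ) * ε ^ 2 / 8)) ≤
      P {ω | Real.sqrt (∑ i, (x t ω i - μ t i) ^ 2) ≤ σ * Real.sqrt (d * (1 + ε)) ∧
             Real.sqrt (∑ i, (x (t + τ) ω i - μ t i) ^ 2) > σ * Real.sqrt (d * (1 + ε))} := by
  set R := σ * √(d * (1 + ε))
  set E : ℕ → Set Ω := fun s => {ω | R < √(∑ i, (x s ω i - μ s i) ^ 2)}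
  have hE : ∀ s, P (E s) ≤ ENNReal.ofReal (exp (-(d : ℝ) * ε ^ 2 / 8)) := fun s => by
    simpa only [Fintype.card_fin] using
      measure_sqrt_sum_sq_sub_gt_le hσ (hlaw s) hε.1.le hε.2.le
  have hRτ : 2 * R < τ * α := by
    rw [gt_iff_lt, div_lt_iff₀ hα] at hτ; linarith
  have hτ0 : 0 < τ := by
    have : 0 < (τ : ℝ) * α := lt_of_le_of_lt (by positivity) hRτ
    exact_mod_cast pos_of_mul_pos_left this hα.le
  have hfar : τ * α ≤ √(∑ i, (μ t i - μ (t + τ) i) ^ 2) := by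
    simpa using hdrift t (t + τ) (by omega)
  have hgood : (E t ∪ E (t + τ))ᶜ ⊆ {ω | √(∑ i, (x t ω i - μ t i) ^ 2) ≤ R ∧
      √(∑ i, (x (t + τ) ω i - μ t i) ^ 2) > R} := by
    intro ω hω
    simp only [Set.compl_union, Set.mem_inter_iff, Set.mem_compl_iff, E, Set.mem_ofPred_eq,
      not_lt] at hω
    exact ⟨hω.1, by linarith [sqrt_sum_sq_sub_le_add (μ t) (μ (t + τ)) (x (t + τ) ω)]⟩
  have hbad : P (E t ∪ E (t + τ)) ≤ 2 * ENNReal.ofReal (exp (-(d : ℝ) * ε ^ 2 / 8)) := by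
    rw [two_mul]; exact (measure_union_le _ _).trans (add_le_add (hE _) (hE _))
  calc 1 - 2 * ENNReal.ofReal (exp (-(d : ℝ) * ε ^ 2 / 8)) ≤ 1 - P (E t ∪ E (t + τ)) :=
        tsub_le_tsub_left hbad 1
    _ ≤ P (E t ∪ E (t + τ))ᶜ :=
      tsub_le_iff_left.2 (measure_univ (μ := P) ▸ measure_univ_le_add_compl _)
    _ ≤ _ := measure_mono hgood

theorem stmt_8 {Ω : Type*} [MeasurableSpace Ω] (P : Measure Ω) [IsProbabilityMeasure P]
    (d : ℕ) (μ : ℕ → Fin d → ℝ) (α : ℝ) (hα : 0 < α)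
    (hdrift : ∀ t t' : ℕ, t < t' →
      ((t' : ℝ) - t) * α ≤ Real.sqrt (∑ i, (μ t i - μ t' i) ^ 2))
    (σ : ℝ≥0) (hσ : 0 < σ) (ε : ℝ) (hε : ε ∈ Set.Ioo (0 : ℝ) 1)
    (x : ℕ → Ω → (Fin d → ℝ)) (hmeas : ∀ t, Measurable (x t))
    (hlaw : ∀ t, Measure.map (x t) P = Measure.pi fun i : Fin d => gaussianReal (μ t i) (σ ^ 2))
    (hindep : iIndepFun x P)
    (τ : ℕ) (hτ : (τ : ℝ) > 2 * σ * Real.sqrt (d * (1 + ε)) / α) (t : ℕ) :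
    1 - 2 * ENNReal.ofReal (Real.exp (-(d : ℝ) * ε ^ 2 / 8)) ≤
      P {ω | Real.sqrt (∑ i, (x t ω i - μ t i) ^ 2) ≤ σ * Real.sqrt (d * (1 + ε)) ∧
             Real.sqrt (∑ i, (x (t + τ) ω i - μ t i) ^ 2) > σ * Real.sqrt (d * (1 + ε))} :=
  stmt_8_general P d μ α hα hdrift σ hσ ε hε x hlaw τ hτ t
end

section
/- Let $\gamma, \gamma' \in (0,1]$ with $\gamma \le \gamma'$, and let $R_1 \le R_2 \le \dots \le R_K$ be nonnegative reals. Define $S(\gamma) = \left(\sum_{i=1}^K \gamma^{i-1} R_i\right)/\left(\sum_{i=1}^K \gamma^{i-1}\right)$. Then $S(\gamma) \le S(\gamma')$. -/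
lemma key_pow (γ γ' : ℝ) (hγ0 : 0 < γ) (hγ'0 : 0 < γ') (hle : γ ≤ γ')
    {i j : ℕ} (hji : j ≤ i) : γ ^ i * γ' ^ j ≤ γ' ^ i * γ ^ j := by
  obtain ⟨d, rfl⟩ := Nat.exists_eq_add_of_le hji
  rw [pow_add, pow_add]
  have h : γ ^ d ≤ γ' ^ d := pow_le_pow_left₀ hγ0.le hle d
  nlinarith [mul_nonneg (mul_nonneg (pow_pos hγ0 j).le (pow_pos hγ'0 j).le)
    (sub_nonneg.2 h)]

theorem stmt_11 (γ γ' : ℝ) (hγ : γ ∈ Set.Ioc (0 : ℝ) 1) (hγ' : γ' ∈ Set.Ioc (0 : ℝ) 1)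
    (hle : γ ≤ γ') (K : ℕ) (R : Fin K → ℝ) (hR0 : ∀ i, 0 ≤ R i) (hmono : Monotone R) :
    (∑ i : Fin K, γ ^ (i : ℕ) * R i) / (∑ i : Fin K, γ ^ (i : ℕ)) ≤
    (∑ i : Fin K, γ' ^ (i : ℕ) * R i) / (∑ i : Fin K, γ' ^ (i : ℕ)) := by
  obtain ⟨hγ0, hγ1⟩ := hγ
  obtain ⟨hγ'0, hγ'1⟩ := hγ'
  rcases Nat.eq_zero_or_pos K with rfl | hK
  · simp
  have hne : (Finset.univ : Finset (Fin K)).Nonempty :=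
    @Finset.univ_nonempty _ _ (Fin.pos_iff_nonempty.mp hK)
  have hd : 0 < ∑ i : Fin K, γ ^ (i : ℕ) :=
    Finset.sum_pos (fun i _ => pow_pos hγ0 _) hne
  have hd' : 0 < ∑ i : Fin K, γ' ^ (i : ℕ) :=
    Finset.sum_pos (fun i _ => pow_pos hγ'0 _) hne
  rw [div_le_div_iff₀ hd hd', Finset.sum_mul_sum, Finset.sum_mul_sum]
  -- pairwise inequality
  have h2 : ∀ i j : Fin K,
      γ ^ (i : ℕ) * R i * γ' ^ (j : ℕ) + γ ^ (j : ℕ) * R j * γ' ^ (i : ℕ) ≤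
      γ' ^ (i : ℕ) * R i * γ ^ (j : ℕ) + γ' ^ (j : ℕ) * R j * γ ^ (i : ℕ) := by
    intro i j
    rcases le_total i j with h | h
    · have hk : γ ^ (j : ℕ) * γ' ^ (i : ℕ) ≤ γ' ^ (j : ℕ) * γ ^ (i : ℕ) :=
        key_pow γ γ' hγ0 hγ'0 hle h
      have hr : R i ≤ R j := hmono h
      nlinarith [mul_nonneg (sub_nonneg.2 hk) (sub_nonneg.2 hr)]
    · have hk : γ ^ (i : ℕ) * γ' ^ (j : ℕ) ≤ γ' ^ (i : ℕ) * γ ^ (j : ℕ) :=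
        key_pow γ γ' hγ0 hγ'0 hle h
      have hr : R j ≤ R i := hmono h
      nlinarith [mul_nonneg (sub_nonneg.2 hk) (sub_nonneg.2 hr)]
  have hsum : ∑ i : Fin K, ∑ j : Fin K,
      (γ ^ (i : ℕ) * R i * γ' ^ (j : ℕ) + γ ^ (j : ℕ) * R j * γ' ^ (i : ℕ)) ≤
      ∑ i : Fin K, ∑ j : Fin K,
      (γ' ^ (i : ℕ) * R i * γ ^ (j : ℕ) + γ' ^ (j : ℕ) * R j * γ ^ (i : ℕ)) :=
    Finset.sum_le_sum fun i _ => Finset.sum_le_sum fun j _ => h2 i j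
  have sym : ∀ f : Fin K → Fin K → ℝ,
      (∑ i : Fin K, ∑ j : Fin K, (f i j + f j i)) =
      2 * ∑ i : Fin K, ∑ j : Fin K, f i j := by
    intro f
    simp only [Finset.sum_add_distrib, two_mul]
    congr 1
    exact Finset.sum_comm
  have e1 := sym (fun i j => γ ^ (i : ℕ) * R i * γ' ^ (j : ℕ))
  have e2 := sym (fun i j => γ' ^ (i : ℕ) * R i * γ ^ (j : ℕ))
  rw [e1, e2] at hsum
  linarith
end
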